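/- Let G be a graph, e = ab an edge with deg(a) + deg(b) ≤ k, and c an acyclic edge coloring of G − e using k + 1 colors such that F_a ∩ F_b = ∅ (no color appears both on an edge at a and an edge at b). Then c extends to an acyclic edge coloring of G with k + 1 colors; in fact every candidate color for e is valid. -/

import Mathlib

open SimpleGraph

/-- Property A: every induced subgraph `H` satisfies `|E(H)| ≤ 2|V(H)| - 1`. -/
def PropertyA {V : Type*} (G : SimpleGraph V) : Prop :=
  ∀ s : Set V, (G.induce s).edgeSet.ncard ≤ 2 * s.ncard - 1

/-- `H` is a minor of `G`: branch sets are disjoint, connected, and adjacency is represented. -/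
def IsMinor {W V : Type*} (H : SimpleGraph W) (G : SimpleGraph V) : Prop :=
  ∃ f : W → Set V,
    (∀ w, (G.induce (f w)).Connected) ∧
    (∀ w₁ w₂, w₁ ≠ w₂ → Disjoint (f w₁) (f w₂)) ∧
    (∀ w₁ w₂, H.Adj w₁ w₂ → ∃ a ∈ f w₁, ∃ b ∈ f w₂, G.Adj a b)

/-- Planarity via Wagner's theorem: no `K₅` minor and no `K₃,₃` minor. -/
def IsPlanar {V : Type*} (G : SimpleGraph V) : Prop :=
  ¬ IsMinor (completeGraph (Fin 5)) G ∧
  ¬ IsMinor (completeBipartiteGraph (Fin 3) (Fin 3)) G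

/-- A proper edge coloring: distinct edges sharing a vertex get distinct colors. -/
def IsProperEdgeColoring {V β : Type*} (G : SimpleGraph V) (c : Sym2 V → β) : Prop :=
  ∀ e ∈ G.edgeSet, ∀ f ∈ G.edgeSet, e ≠ f → (∃ v, v ∈ e ∧ v ∈ f) → c e ≠ c f

/-- An acyclic edge coloring: proper and no cycle uses only two colors. -/
def IsAcyclicEdgeColoring {V β : Type*} (G : SimpleGraph V) (c : Sym2 V → β) : Prop :=
  IsProperEdgeColoring G c ∧
    ∀ (γ δ : β) (v : V) (p : G.Walk v v), p.IsCycle →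
      ¬ ∀ e ∈ p.edges, c e = γ ∨ c e = δ

/-- `G` admits an acyclic edge coloring with at most `k` colors. -/
def AcyclicallyEdgeColorable {V : Type*} (G : SimpleGraph V) (k : ℕ) : Prop :=
  ∃ c : Sym2 V → Fin k, IsAcyclicEdgeColoring G c

/-- A proper partial edge coloring (uncolored edges get `none`). -/
def IsProperPartialEdgeColoring {V : Type*} (G : SimpleGraph V) (c : Sym2 V → Option ℕ) : Prop :=
  ∀ e ∈ G.edgeSet, ∀ f ∈ G.edgeSet, e ≠ f → (∃ v, v ∈ e ∧ v ∈ f) →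
    ∀ γ : ℕ, c e = some γ → c f ≠ some γ

/-- There is a cycle all of whose edges are colored with one of two colors. -/
def HasBichromaticCycle {V : Type*} (G : SimpleGraph V) (c : Sym2 V → Option ℕ) : Prop :=
  ∃ (γ δ : ℕ) (v : V) (p : G.Walk v v), p.IsCycle ∧
    ∀ e ∈ p.edges, c e = some γ ∨ c e = some δ

/-- A valid (acyclic proper) partial edge coloring. -/
def IsAcyclicPartialEdgeColoring {V : Type*} (G : SimpleGraph V) (c : Sym2 V → Option ℕ) : Prop :=
  IsProperPartialEdgeColoring G c ∧ ¬ HasBichromaticCycle G c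

/-- `F_a`: the set of colors appearing on edges incident to `a`. -/
def colorsAt {V : Type*} (G : SimpleGraph V) (c : Sym2 V → Option ℕ) (a : V) : Set ℕ :=
  {γ | ∃ z, G.Adj a z ∧ c s(a, z) = some γ}

/-- `S_{ab} = F_b \ {c(a,b)}`. -/
def Sset {V : Type*} (G : SimpleGraph V) (c : Sym2 V → Option ℕ) (a b : V) : Set ℕ :=
  colorsAt G c b \ {γ | c s(a, b) = some γ}

/-- A maximal `(γ,δ)`-bichromatic path: a path all of whose edges are colored `γ` or `δ`,
which cannot be extended at either end by a `γ`- or `δ`-colored edge. -/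
def IsMaxBichromaticPath {V : Type*} (G : SimpleGraph V) (c : Sym2 V → Option ℕ)
    (γ δ : ℕ) {x y : V} (p : G.Walk x y) : Prop :=
  p.IsPath ∧ (∀ e ∈ p.edges, c e = some γ ∨ c e = some δ) ∧
    ∀ e ∈ G.edgeSet, (x ∈ e ∨ y ∈ e) → (c e = some γ ∨ c e = some δ) → e ∈ p.edges

/-- A `(γ,δ,ab)`-critical path: a maximal `(γ,δ)`-bichromatic path from `a` to `b`
whose first and last edges are colored `γ`. -/
def IsCriticalPath {V : Type*} (G : SimpleGraph V) (c : Sym2 V → Option ℕ)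
    (γ δ : ℕ) (a b : V) (p : G.Walk a b) : Prop :=
  IsMaxBichromaticPath G c γ δ p ∧
    (∃ e, p.edges.head? = some e ∧ c e = some γ) ∧
    (∃ e, p.edges.getLast? = some e ∧ c e = some γ)

/-! A candidate colour `β ∉ F_a ∪ F_b` exists because `|F_a ∪ F_b| ≤ deg a + deg b ≤ k`.
Giving it to `ab` keeps the colouring proper. A bichromatic cycle through `ab` would use `β`
and one other colour `ε`; its second edges at `a` and at `b` are not coloured `β`, hence `ε`,
so `ε ∈ F_a ∩ F_b`. Cycles avoiding `ab` are excluded by the acyclicity of `c`. -/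

lemma SimpleGraph.Walk.IsCycle.exists_mem_edges_ne {V : Type*} {G : SimpleGraph V} {u x : V}
    {p : G.Walk u u} (hp : p.IsCycle) (hx : x ∈ p.support) (e : Sym2 V) :
    ∃ f ∈ p.edges, f ≠ e ∧ x ∈ f := by
  obtain ⟨w₁, w₂, hne, hN⟩ := Set.ncard_eq_two.mp (hp.ncard_neighborSet_toSubgraph_eq_two hx)
  have hw : ∀ w ∈ p.toSubgraph.neighborSet x, s(x, w) ∈ p.edges := fun _ h ↦
    Walk.adj_toSubgraph_iff_mem_edges.mp h
  by_cases h₁ : s(x, w₁) = e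
  · refine ⟨s(x, w₂), hw w₂ (by simp [hN]), ?_, Sym2.mem_mk_left _ _⟩
    rw [← h₁]
    exact mt Sym2.congr_right.mp hne.symm
  · exact ⟨s(x, w₁), hw w₁ (by simp [hN]), h₁, Sym2.mem_mk_left _ _⟩

section colorsAt

variable {V : Type*} {G : SimpleGraph V} {c : Sym2 V → Option ℕ}

lemma mem_colorsAt_of_mem {x : V} {f : Sym2 V} (hf : f ∈ G.edgeSet) (hx : x ∈ f) {γ : ℕ}
    (hγ : c f = some γ) : γ ∈ colorsAt G c x := by
  obtain ⟨z, rfl⟩ := Sym2.mem_iff_exists.mp hx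
  exact ⟨z, hf, hγ⟩

lemma colorsAt_subset_image [Fintype V] [DecidableRel G.Adj] (x : V) :
    colorsAt G c x ⊆ ↑((G.neighborFinset x).image fun z ↦ (c s(x, z)).getD 0) := by
  rintro γ ⟨z, hadj, hz⟩
  simp only [Finset.coe_image, Set.mem_image, Finset.mem_coe, mem_neighborFinset]
  exact ⟨z, hadj, by rw [hz]; rfl⟩

lemma exists_lt_notMem_colorsAt_union [Fintype V] [DecidableRel G.Adj] (a b : V) :
    ∃ β < G.degree a + G.degree b + 1, β ∉ colorsAt G c a ∪ colorsAt G c b := by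
  set A := ((G.neighborFinset a).image fun z ↦ (c s(a, z)).getD 0) ∪
    ((G.neighborFinset b).image fun z ↦ (c s(b, z)).getD 0)
  have hA : A.card < (Finset.range (G.degree a + G.degree b + 1)).card := by
    rw [Finset.card_range, Nat.lt_succ_iff, ← card_neighborFinset_eq_degree,
      ← card_neighborFinset_eq_degree]
    exact (Finset.card_union_le _ _).trans (add_le_add Finset.card_image_le Finset.card_image_le)
  obtain ⟨β, hβ, hβA⟩ := Finset.exists_mem_notMem_of_card_lt_card hA
  refine ⟨β, Finset.mem_range.mp hβ, ?_⟩
  rintro (h | h)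
  · exact hβA (Finset.mem_union_left _ (colorsAt_subset_image a h))
  · exact hβA (Finset.mem_union_right _ (colorsAt_subset_image b h))

end colorsAt

section update

variable {V : Type*} [DecidableEq V] {G : SimpleGraph V} {c : Sym2 V → Option ℕ} {a b : V}
  {β : ℕ}

lemma update_ne_some_of_notMem_colorsAt (hβ : β ∉ colorsAt G c a ∪ colorsAt G c b)
    {f : Sym2 V} (hf : f ∈ G.edgeSet) (hfab : f ≠ s(a, b)) (hx : a ∈ f ∨ b ∈ f) :
    Function.update c s(a, b) (some β) f ≠ some β := by
  rw [Function.update_of_ne hfab]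
  intro hcf
  exact hβ (hx.imp (mem_colorsAt_of_mem hf · hcf) (mem_colorsAt_of_mem hf · hcf))

lemma IsProperPartialEdgeColoring.update (hc : IsProperPartialEdgeColoring G c)
    (hβ : β ∉ colorsAt G c a ∪ colorsAt G c b) :
    IsProperPartialEdgeColoring G (Function.update c s(a, b) (some β)) := by
  have hneighbour : ∀ {e f : Sym2 V}, e ∈ G.edgeSet → e ≠ f → (∃ v, v ∈ e ∧ v ∈ f) →
      f = s(a, b) → Function.update c s(a, b) (some β) e ≠ some β := by
    rintro e f he hne ⟨v, hve, hvf⟩ rfl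
    refine update_ne_some_of_notMem_colorsAt hβ he hne ?_
    rcases Sym2.mem_iff.mp hvf with rfl | rfl
    exacts [.inl hve, .inr hve]
  intro e he f hf hne hshare γ hce hcf
  by_cases hfab : f = s(a, b)
  · rw [hfab, Function.update_self, Option.some_inj] at hcf
    exact hneighbour he hne hshare hfab (hcf ▸ hce)
  by_cases heab : e = s(a, b)
  · rw [heab, Function.update_self, Option.some_inj] at hce
    exact hneighbour hf (Ne.symm hne) (hshare.imp fun _ ↦ And.symm) heab (hce ▸ hcf)
  rw [Function.update_of_ne heab] at hce
  rw [Function.update_of_ne hfab] at hcf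
  exact hc e he f hf hne hshare γ hce hcf

lemma not_hasBichromaticCycle_update (hc : ¬ HasBichromaticCycle G c)
    (hF : colorsAt G c a ∩ colorsAt G c b = ∅) (hβ : β ∉ colorsAt G c a ∪ colorsAt G c b) :
    ¬ HasBichromaticCycle G (Function.update c s(a, b) (some β)) := by
  set c' := Function.update c s(a, b) (some β)
  rintro ⟨γ, δ, v, p, hcyc, hall⟩
  by_cases hmem : s(a, b) ∈ p.edges
  swap
  · refine hc ⟨γ, δ, v, p, hcyc, fun e he ↦ ?_⟩
    rw [← Function.update_of_ne (ne_of_mem_of_not_mem he hmem) (some β) c]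
    exact hall e he
  have hβγδ : β = γ ∨ β = δ := by
    simpa [c', Function.update_self] using hall s(a, b) hmem
  obtain ⟨ε, hε⟩ : ∃ ε, ∀ f ∈ p.edges, c' f ≠ some β → c' f = some ε := by
    rcases hβγδ with rfl | rfl
    exacts [⟨δ, fun f hf h ↦ (hall f hf).resolve_left h⟩,
      ⟨γ, fun f hf h ↦ (hall f hf).resolve_right h⟩]
  have hother : ∀ x, a = x ∨ b = x → x ∈ p.support → ε ∈ colorsAt G c x := by
    intro x hx hxp
    obtain ⟨f, hf, hfab, hxf⟩ := hcyc.exists_mem_edges_ne hxp s(a, b)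
    have hfE := p.edges_subset_edgeSet hf
    have hcf : c f = some ε := by
      rw [← Function.update_of_ne hfab (some β) c]
      refine hε f hf <| update_ne_some_of_notMem_colorsAt hβ hfE hfab ?_
      rcases hx with rfl | rfl
      exacts [.inl hxf, .inr hxf]
    exact mem_colorsAt_of_mem hfE hxf hcf
  have : ε ∈ colorsAt G c a ∩ colorsAt G c b :=
    ⟨hother a (.inl rfl) (p.fst_mem_support_of_mem_edges hmem),
      hother b (.inr rfl) (p.snd_mem_support_of_mem_edges hmem)⟩
  simp [hF] at this

lemma IsAcyclicPartialEdgeColoring.update (hc : IsAcyclicPartialEdgeColoring G c)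
    (hF : colorsAt G c a ∩ colorsAt G c b = ∅) (hβ : β ∉ colorsAt G c a ∪ colorsAt G c b) :
    IsAcyclicPartialEdgeColoring G (Function.update c s(a, b) (some β)) :=
  ⟨hc.1.update hβ, not_hasBichromaticCycle_update hc.2 hF hβ⟩

end update

theorem extend_coloring_of_disjoint_general {V : Type*} [Fintype V] [DecidableEq V]
    (G : SimpleGraph V) [DecidableRel G.Adj] (k : ℕ)
    (a b : V) (hdeg : G.degree a + G.degree b ≤ k)
    (c : Sym2 V → Option ℕ)
    (htot : ∀ e ∈ G.edgeSet, e ≠ s(a, b) → c e ≠ none)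
    (hc : IsAcyclicPartialEdgeColoring G c)
    (hF : colorsAt G c a ∩ colorsAt G c b = ∅) :
    (∀ β, β < k + 1 → β ∉ colorsAt G c a ∪ colorsAt G c b →
      IsAcyclicPartialEdgeColoring G (Function.update c s(a, b) (some β))) ∧
    (∃ β, β < k + 1 ∧ β ∉ colorsAt G c a ∪ colorsAt G c b ∧
      IsAcyclicPartialEdgeColoring G (Function.update c s(a, b) (some β)) ∧
      ∀ e ∈ G.edgeSet, Function.update c s(a, b) (some β) e ≠ none) := by
  refine ⟨fun β _ hβ ↦ hc.update hF hβ, ?_⟩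
  obtain ⟨β, hβk, hβ⟩ := exists_lt_notMem_colorsAt_union (G := G) (c := c) a b
  refine ⟨β, by omega, hβ, hc.update hF hβ, fun e he ↦ ?_⟩
  by_cases heab : e = s(a, b)
  · simp [heab]
  · rw [Function.update_of_ne heab]
    exact htot e he heab

/-- if `deg a + deg b ≤ k`, `c` is an acyclic coloring of `G - ab` with
`k + 1` colors and `F_a ∩ F_b = ∅`, then every candidate color for `ab` is valid;
in particular `c` extends to an acyclic edge coloring of all of `G`. -/
theorem extend_coloring_of_disjoint {V : Type*} [Fintype V] [DecidableEq V]
    (G : SimpleGraph V) [DecidableRel G.Adj] (k : ℕ)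
    (a b : V) (hab : G.Adj a b) (hdeg : G.degree a + G.degree b ≤ k)
    (c : Sym2 V → Option ℕ)
    (hrange : ∀ e γ, c e = some γ → γ < k + 1)
    (hun : c s(a, b) = none)
    (htot : ∀ e ∈ G.edgeSet, e ≠ s(a, b) → c e ≠ none)
    (hc : IsAcyclicPartialEdgeColoring G c)
    (hF : colorsAt G c a ∩ colorsAt G c b = ∅) :
    (∀ β, β < k + 1 → β ∉ colorsAt G c a ∪ colorsAt G c b →
      IsAcyclicPartialEdgeColoring G (Function.update c s(a, b) (some β))) ∧
    (∃ β, β < k + 1 ∧ β ∉ colorsAt G c a ∪ colorsAt G c b ∧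
      IsAcyclicPartialEdgeColoring G (Function.update c s(a, b) (some β)) ∧
      ∀ e ∈ G.edgeSet, Function.update c s(a, b) (some β) e ≠ none) :=
  extend_coloring_of_disjoint_general G k a b hdeg c htot hc hF
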